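/- Let G = (V, E) be a finite graph and k ≥ 1 an integer with k ≤ |V|. Construct the hedonic game with agents N = {a_v : v ∈ V} ∪ {Gr, R, B}, where Grn = {Gr} consists of the single green agent Gr. Let M_G be the set of coalitions of the form {Gr} ∪ {a_v : v ∈ W} with W ⊆ V and |W| = k. Preferences: each a_v is indifferent among all coalitions {Gr} ∪ {a_u : u ∈ W} with v ∈ W, |W| = k, and W an independent set of G (no two elements of W are adjacent), strictly prefers each of them to {a_v}, and strictly prefers {a_v} to every other coalition containing a_v; Gr, R and B have the trap-gadget preferences with respect to M_G, with Gr indifferent among the coalitions of M_G. Then the following are equivalent: (1) the game admits a Nash stable outcome; (2) the game admits an individually stable outcome; (3) G contains an independent set of size k. -/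
import Mathlib


/-- Strict preference derived from a weak preference relation. -/
def SPref {α : Type*} (pref : α → Finset α → Finset α → Prop)
    (i : α) (X Y : Finset α) : Prop :=
  pref i X Y ∧ ¬ pref i Y X

/-- An outcome: a partition of the agents into nonempty coalitions. -/
def IsOutcome {α : Type*} [Fintype α] [DecidableEq α] (Part : Finset (Finset α)) : Prop :=
  (∀ C ∈ Part, C.Nonempty) ∧
  (∀ C ∈ Part, ∀ D ∈ Part, C ≠ D → Disjoint C D) ∧
  (∀ i : α, ∃ C ∈ Part, i ∈ C)

/-- Nash stability. -/
def NashStable {α : Type*} [DecidableEq α] (pref : α → Finset α → Finset α → Prop)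
    (Part : Finset (Finset α)) : Prop :=
  ∀ i : α, ∀ Ci ∈ Part, i ∈ Ci →
    ∀ C : Finset α, (C ∈ Part ∨ C = ∅) → C ≠ Ci →
      ¬ SPref pref i (insert i C) Ci

/-- Individual stability. -/
def IndStable {α : Type*} [DecidableEq α] (pref : α → Finset α → Finset α → Prop)
    (Part : Finset (Finset α)) : Prop :=
  ∀ i : α, ∀ Ci ∈ Part, i ∈ Ci →
    ∀ C : Finset α, (C ∈ Part ∨ C = ∅) → C ≠ Ci →
      ¬ (SPref pref i (insert i C) Ci ∧ ∀ j ∈ C, pref j (insert i C) C)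

/-- Trap-gadget preferences of the agents `R`, `B` and the green agents `Grn`
with respect to a collection `MG` of coalitions. -/
structure TrapGadget {α : Type*} [DecidableEq α]
    (pref : α → Finset α → Finset α → Prop)
    (R B : α) (Grn : Finset α) (MG : Set (Finset α)) : Prop where
  /-- R strictly prefers {R,B} to every other coalition containing R. -/
  R_top : ∀ C : Finset α, R ∈ C → C ≠ {R, B} → SPref pref R {R, B} C
  /-- Among coalitions {R} ∪ S with ∅ ≠ S ⊆ Grn, R strictly prefers those with more
  green agents. -/
  R_green_mono : ∀ S T : Finset α, S.Nonempty → S ⊆ Grn → T.Nonempty → T ⊆ Grn →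
    T.card < S.card → SPref pref R (insert R S) (insert R T)
  /-- R strictly prefers each coalition {R} ∪ S with ∅ ≠ S ⊆ Grn to {R}. -/
  R_green_over_alone : ∀ S : Finset α, S.Nonempty → S ⊆ Grn →
    SPref pref R (insert R S) {R}
  /-- R strictly prefers {R} to every coalition containing R not of the above forms. -/
  R_alone_over_rest : ∀ C : Finset α, R ∈ C → C ≠ {R, B} → C ≠ {R} →
    (¬ ∃ S : Finset α, S.Nonempty ∧ S ⊆ Grn ∧ C = insert R S) →
    SPref pref R {R} C
  /-- Among coalitions {B} ∪ S with ∅ ≠ S ⊆ Grn, B strictly prefers those with more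
  green agents. -/
  B_green_mono : ∀ S T : Finset α, S.Nonempty → S ⊆ Grn → T.Nonempty → T ⊆ Grn →
    T.card < S.card → SPref pref B (insert B S) (insert B T)
  /-- B strictly prefers each coalition {B} ∪ S with ∅ ≠ S ⊆ Grn to {R,B}. -/
  B_green_over_RB : ∀ S : Finset α, S.Nonempty → S ⊆ Grn →
    SPref pref B (insert B S) {R, B}
  /-- B strictly prefers {R,B} to {B}. -/
  B_RB_over_alone : SPref pref B {R, B} {B}
  /-- B strictly prefers {B} to every other coalition containing B. -/
  B_alone_over_rest : ∀ C : Finset α, B ∈ C → C ≠ {R, B} → C ≠ {B} →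
    (¬ ∃ S : Finset α, S.Nonempty ∧ S ⊆ Grn ∧ C = insert B S) →
    SPref pref B {B} C
  /-- Every green agent strictly prefers every coalition of MG containing it to every
  coalition containing it that is not in MG. -/
  G_MG_top : ∀ g ∈ Grn, ∀ C ∈ MG, g ∈ C → ∀ C' : Finset α, g ∈ C' → C' ∉ MG →
    SPref pref g C C'
  /-- Among non-MG coalitions, a green agent g strictly prefers coalitions of the form
  {R} ∪ S with g ∈ S ⊆ Grn to coalitions of the form {B} ∪ S' with g ∈ S' ⊆ Grn. -/
  G_R_over_B : ∀ g ∈ Grn, ∀ S T : Finset α, g ∈ S → S ⊆ Grn → g ∈ T → T ⊆ Grn →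
    insert R S ∉ MG → insert B T ∉ MG → SPref pref g (insert R S) (insert B T)
  /-- ... strictly prefers those to coalitions S'' ⊆ Grn with g ∈ S''. -/
  G_B_over_G : ∀ g ∈ Grn, ∀ S T : Finset α, g ∈ S → S ⊆ Grn → g ∈ T → T ⊆ Grn →
    insert B S ∉ MG → T ∉ MG → SPref pref g (insert B S) T
  /-- ... and strictly prefers those to all remaining coalitions containing g. -/
  G_G_over_rest : ∀ g ∈ Grn, ∀ S C : Finset α, g ∈ S → S ⊆ Grn → S ∉ MG →
    g ∈ C → C ∉ MG →
    (¬ ∃ T : Finset α, g ∈ T ∧ T ⊆ Grn ∧ (C = T ∨ C = insert R T ∨ C = insert B T)) →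
    SPref pref g S C
  /-- Within the form {R} ∪ S, a green agent strictly prefers coalitions with more
  green agents. -/
  G_R_mono : ∀ g ∈ Grn, ∀ S T : Finset α, g ∈ S → S ⊆ Grn → g ∈ T → T ⊆ Grn →
    insert R S ∉ MG → insert R T ∉ MG → T.card < S.card →
    SPref pref g (insert R S) (insert R T)
  /-- Within the form {B} ∪ S', a green agent strictly prefers coalitions with more
  green agents. -/
  G_B_mono : ∀ g ∈ Grn, ∀ S T : Finset α, g ∈ S → S ⊆ Grn → g ∈ T → T ⊆ Grn →
    insert B S ∉ MG → insert B T ∉ MG → T.card < S.card →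
    SPref pref g (insert B S) (insert B T)
  /-- Within the form S'', a green agent strictly prefers coalitions with more
  green agents. -/
  G_G_mono : ∀ g ∈ Grn, ∀ S T : Finset α, g ∈ S → S ⊆ Grn → g ∈ T → T ⊆ Grn →
    S ∉ MG → T ∉ MG → T.card < S.card → SPref pref g S T

/-- The agents: one vertex agent per vertex of the graph, the green agent `Gr`, and the
agents `R` and `B`. -/
abbrev ISAgent (V : Type*) := V ⊕ Fin 3

/-- The green agent. -/
abbrev isGr (V : Type*) : ISAgent V := Sum.inr 0
/-- The agent R. -/
abbrev isR (V : Type*) : ISAgent V := Sum.inr 1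
/-- The agent B. -/
abbrev isB (V : Type*) : ISAgent V := Sum.inr 2

/-- The collection MG: the green agent together with exactly `k` vertex agents. -/
def isMG (V : Type*) [DecidableEq V] (k : ℕ) : Set (Finset (ISAgent V)) :=
  {C | ∃ W : Finset V, W.card = k ∧ C = insert (isGr V) (W.image Sum.inl)}

/-- The coalitions approved by the vertex agent of `v`: the green agent together with
`k` vertex agents forming an independent set containing `v`. -/
def isGood {V : Type*} [DecidableEq V] (G : SimpleGraph V) (k : ℕ) (v : V)
    (C : Finset (ISAgent V)) : Prop :=
  ∃ W : Finset V, v ∈ W ∧ W.card = k ∧ (∀ u ∈ W, ∀ w ∈ W, ¬ G.Adj u w) ∧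
    C = insert (isGr V) (W.image Sum.inl)


section Helpers

lemma sprefTrans {α : Type*} (pref : α → Finset α → Finset α → Prop)
    (htrans : ∀ (a : α) (X Y Z : Finset α), pref a X Y → pref a Y Z → pref a X Z)
    {i : α} {X Y Z : Finset α} (h1 : SPref pref i X Y) (h2 : SPref pref i Y Z) :
    SPref pref i X Z :=
  ⟨htrans _ _ _ _ h1.1 h2.1, fun h => h2.2 (htrans _ _ _ _ h h1.1)⟩

variable {V : Type*} [DecidableEq V] {k : ℕ}

lemma mg_elem {C : Finset (ISAgent V)} (h : C ∈ isMG V k) :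
    ∀ x ∈ C, x = isGr V ∨ ∃ v : V, x = Sum.inl v := by
  obtain ⟨W, -, rfl⟩ := h
  intro x hx
  rcases Finset.mem_insert.1 hx with h | h
  · exact Or.inl h
  · obtain ⟨v, -, rfl⟩ := Finset.mem_image.1 h
    exact Or.inr ⟨v, rfl⟩

lemma R_notMG {C : Finset (ISAgent V)} (h : isR V ∈ C) : C ∉ isMG V k := by
  intro hC
  rcases mg_elem hC _ h with h' | ⟨v, h'⟩ <;> simp at h'

lemma B_notMG {C : Finset (ISAgent V)} (h : isB V ∈ C) : C ∉ isMG V k := by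
  intro hC
  rcases mg_elem hC _ h with h' | ⟨v, h'⟩ <;> simp at h'

lemma grSingleton_notMG (hk : 1 ≤ k) : ({isGr V} : Finset (ISAgent V)) ∉ isMG V k := by
  rintro ⟨W, hW, hEq⟩
  obtain ⟨v, hv⟩ := Finset.card_pos.1 (by omega : 0 < W.card)
  have : (Sum.inl v : ISAgent V) ∈ ({isGr V} : Finset (ISAgent V)) := by
    rw [hEq]
    exact Finset.mem_insert_of_mem (Finset.mem_image_of_mem _ hv)
  simp at this

lemma insert_gr_sub {W W' : Finset V}
    (h : insert (isGr V) (W.image (Sum.inl : V → ISAgent V)) =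
      insert (isGr V) (W'.image Sum.inl)) :
    W ⊆ W' := by
  intro v hv
  have hmem : (Sum.inl v : ISAgent V) ∈ insert (isGr V) (W'.image Sum.inl) := by
    rw [← h]
    exact Finset.mem_insert_of_mem (Finset.mem_image_of_mem _ hv)
  rcases Finset.mem_insert.1 hmem with h' | h'
  · simp at h'
  · obtain ⟨u, hu, he⟩ := Finset.mem_image.1 h'
    obtain rfl := Sum.inl.inj he
    exact hu

lemma insert_gr_inj {W W' : Finset V}
    (h : insert (isGr V) (W.image (Sum.inl : V → ISAgent V)) =
      insert (isGr V) (W'.image Sum.inl)) :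
    W = W' :=
  Finset.Subset.antisymm (insert_gr_sub h) (insert_gr_sub h.symm)

lemma good_gr {G : SimpleGraph V} {v : V} {C : Finset (ISAgent V)}
    (h : isGood G k v C) : isGr V ∈ C := by
  obtain ⟨W, -, -, -, rfl⟩ := h
  exact Finset.mem_insert_self _ _

lemma good_elem {G : SimpleGraph V} {v : V} {C : Finset (ISAgent V)}
    (h : isGood G k v C) : ∀ x ∈ C, x = isGr V ∨ ∃ u : V, x = Sum.inl u := by
  obtain ⟨W, -, -, -, rfl⟩ := h
  intro x hx
  rcases Finset.mem_insert.1 hx with h | h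
  · exact Or.inl h
  · obtain ⟨u, -, rfl⟩ := Finset.mem_image.1 h
    exact Or.inr ⟨u, rfl⟩

lemma singleton_of_sub {a : α} [DecidableEq α] {S : Finset α}
    (h1 : S.Nonempty) (h2 : S ⊆ {a}) : S = {a} := by
  rcases Finset.subset_singleton_iff.1 h2 with rfl | rfl
  · exact absurd h1 (by simp)
  · rfl

end Helpers

/-- The hedonic game built from a graph `G` and an integer `k` admits a Nash
stable outcome iff it admits an individually stable outcome iff `G` has an independent
set of size `k`. -/
theorem independentSet_reduction {V : Type*} [Fintype V] [DecidableEq V]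
    (G : SimpleGraph V) (k : ℕ) (hk : 1 ≤ k) (hkV : k ≤ Fintype.card V)
    (pref : ISAgent V → Finset (ISAgent V) → Finset (ISAgent V) → Prop)
    (htot : ∀ (a : ISAgent V) (X Y : Finset (ISAgent V)),
      a ∈ X → a ∈ Y → pref a X Y ∨ pref a Y X)
    (htrans : ∀ (a : ISAgent V) (X Y Z : Finset (ISAgent V)),
      pref a X Y → pref a Y Z → pref a X Z)
    -- each vertex agent is indifferent among its approved coalitions
    (hV_indiff : ∀ (v : V) (C C' : Finset (ISAgent V)),
      isGood G k v C → isGood G k v C' → pref (Sum.inl v) C C')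
    -- it strictly prefers each of them to being alone
    (hV_over_alone : ∀ (v : V) (C : Finset (ISAgent V)),
      isGood G k v C → SPref pref (Sum.inl v) C {Sum.inl v})
    -- and strictly prefers being alone to every other coalition containing it
    (hV_alone_over_rest : ∀ (v : V) (C : Finset (ISAgent V)),
      Sum.inl v ∈ C → ¬ isGood G k v C → C ≠ {Sum.inl v} →
      SPref pref (Sum.inl v) {Sum.inl v} C)
    -- Gr, R and B have the trap-gadget preferences w.r.t. MG
    (htrap : TrapGadget pref (isR V) (isB V) {isGr V} (isMG V k))
    -- Gr is indifferent among the coalitions of MG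
    (hGr_indiff : ∀ C C' : Finset (ISAgent V),
      C ∈ isMG V k → C' ∈ isMG V k → isGr V ∈ C → isGr V ∈ C' →
      pref (isGr V) C C') :
    ((∃ Part : Finset (Finset (ISAgent V)), IsOutcome Part ∧ NashStable pref Part) ↔
      (∃ Part : Finset (Finset (ISAgent V)), IsOutcome Part ∧ IndStable pref Part)) ∧
    ((∃ Part : Finset (Finset (ISAgent V)), IsOutcome Part ∧ IndStable pref Part) ↔
      (∃ W : Finset V, W.card = k ∧ ∀ u ∈ W, ∀ w ∈ W, ¬ G.Adj u w)) := by
  -- Part 1: Nash stable implies individually stable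
  have ns_to_is : (∃ Part : Finset (Finset (ISAgent V)), IsOutcome Part ∧ NashStable pref Part) →
      (∃ Part : Finset (Finset (ISAgent V)), IsOutcome Part ∧ IndStable pref Part) := by
    rintro ⟨Part, hOut, hNS⟩
    refine ⟨Part, hOut, ?_⟩
    intro i Ci hCi hi C hC hne h
    exact hNS i Ci hCi hi C hC hne h.1
  -- Part 2: individually stable implies independent set of size k
  have is_to_set : (∃ Part : Finset (Finset (ISAgent V)), IsOutcome Part ∧ IndStable pref Part) →
      (∃ W : Finset V, W.card = k ∧ ∀ u ∈ W, ∀ w ∈ W, ¬ G.Adj u w) := by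
    rintro ⟨Part, ⟨hnonempty, hdisj, hcov⟩, hIS⟩
    have uniq : ∀ {x : ISAgent V} {C D : Finset (ISAgent V)},
        C ∈ Part → D ∈ Part → x ∈ C → x ∈ D → C = D := by
      intro x C D hC hD hxC hxD
      by_contra hne'
      exact (Finset.disjoint_left.1 (hdisj C hC D hD hne')) hxC hxD
    obtain ⟨CG, hCG, hGrCG⟩ := hcov (isGr V)
    have hCGne : (∅ : Finset (ISAgent V)) ≠ CG := fun h => by
      rw [← h] at hGrCG; simp at hGrCG
    by_cases hMG : CG ∈ isMG V k
    · obtain ⟨W, hWc, hCGeq⟩ := hMG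
      refine ⟨W, hWc, ?_⟩
      intro u hu w hw hadj
      have huC : Sum.inl u ∈ CG := by
        rw [hCGeq]; exact Finset.mem_insert_of_mem (Finset.mem_image_of_mem _ hu)
      have hngood : ¬ isGood G k u CG := by
        rintro ⟨W', hu', hc', hind', hEq⟩
        have hWW : W' = W := insert_gr_inj (hEq.symm.trans hCGeq)
        subst hWW
        exact hind' u hu w hw hadj
      have hne1 : CG ≠ {Sum.inl u} := by
        intro h; rw [h] at hGrCG; simp at hGrCG
      have hs := hV_alone_over_rest u CG huC hngood hne1
      exact hIS (Sum.inl u) CG hCG huC ∅ (Or.inr rfl) hCGne ⟨hs, by simp⟩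
    · exfalso
      have hGrS_not : ({isGr V} : Finset (ISAgent V)) ∉ isMG V k := grSingleton_notMG hk
      have hRG_not : (insert (isR V) {isGr V}) ∉ isMG V k :=
        R_notMG (Finset.mem_insert_self _ _)
      have hBG_not : (insert (isB V) {isGr V}) ∉ isMG V k :=
        B_notMG (Finset.mem_insert_self _ _)
      by_cases h1 : CG = {isGr V}
      · -- B wants to join Gr
        obtain ⟨CB, hCB, hBCB⟩ := hcov (isB V)
        have hGrCB : isGr V ∉ CB := by
          intro h
          have heq := uniq hCB hCG h hGrCG
          rw [heq, h1] at hBCB; simp at hBCB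
        have sB : SPref pref (isB V) (insert (isB V) {isGr V}) CB := by
          have s1 : SPref pref (isB V) (insert (isB V) {isGr V}) {isR V, isB V} :=
            htrap.B_green_over_RB {isGr V} (Finset.singleton_nonempty _) (subset_refl _)
          have s2 := htrap.B_RB_over_alone
          by_cases hb1 : CB = {isR V, isB V}
          · rw [hb1]; exact s1
          by_cases hb2 : CB = {isB V}
          · rw [hb2]; exact sprefTrans pref htrans s1 s2
          have s3 : SPref pref (isB V) {isB V} CB := by
            refine htrap.B_alone_over_rest CB hBCB hb1 hb2 ?_
            rintro ⟨S, hSne, hSsub, rfl⟩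
            obtain rfl : S = {isGr V} := singleton_of_sub hSne hSsub
            exact hGrCB (Finset.mem_insert_of_mem (Finset.mem_singleton_self _))
          exact sprefTrans pref htrans (sprefTrans pref htrans s1 s2) s3
        refine hIS (isB V) CB hCB hBCB CG (Or.inl hCG) (fun h => hGrCB (h ▸ hGrCG)) ⟨?_, ?_⟩
        · rw [h1]; exact sB
        · intro j hj
          rw [h1, Finset.mem_singleton] at hj
          subst hj
          rw [h1]
          exact (htrap.G_B_over_G (isGr V) (Finset.mem_singleton_self _) {isGr V} {isGr V}
            (Finset.mem_singleton_self _) (subset_refl _) (Finset.mem_singleton_self _)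
            (subset_refl _) hBG_not hGrS_not).1
      by_cases h2 : CG = insert (isB V) {isGr V}
      · -- Gr is with B; then R is alone and Gr joins R
        obtain ⟨CR, hCR, hRCR⟩ := hcov (isR V)
        have hGrCR : isGr V ∉ CR := by
          intro h
          have heq := uniq hCR hCG h hGrCG
          rw [heq, h2] at hRCR; simp at hRCR
        have hBCR : isB V ∉ CR := by
          intro h
          have hBCG : isB V ∈ CG := by rw [h2]; exact Finset.mem_insert_self _ _
          have heq := uniq hCR hCG h hBCG
          rw [heq, h2] at hRCR; simp at hRCR
        have hCRR : CR = {isR V} := by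
          by_contra hne'
          have s : SPref pref (isR V) {isR V} CR := by
            refine htrap.R_alone_over_rest CR hRCR ?_ hne' ?_
            · intro h
              exact hBCR (h ▸ (by simp : isB V ∈ ({isR V, isB V} : Finset (ISAgent V))))
            · rintro ⟨S, hSne, hSsub, rfl⟩
              obtain rfl : S = {isGr V} := singleton_of_sub hSne hSsub
              exact hGrCR (Finset.mem_insert_of_mem (Finset.mem_singleton_self _))
          refine hIS (isR V) CR hCR hRCR ∅ (Or.inr rfl)
            (fun h => by rw [← h] at hRCR; simp at hRCR) ⟨s, by simp⟩
        have key : SPref pref (isGr V) (insert (isR V) {isGr V}) (insert (isB V) {isGr V}) :=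
          htrap.G_R_over_B (isGr V) (Finset.mem_singleton_self _) {isGr V} {isGr V}
            (Finset.mem_singleton_self _) (subset_refl _) (Finset.mem_singleton_self _)
            (subset_refl _) hRG_not hBG_not
        have hCRne : CR ≠ CG := by
          intro h; rw [← h, hCRR] at hGrCG; simp at hGrCG
        have hpair : insert (isGr V) {isR V} = insert (isR V) {isGr V} :=
          Finset.pair_comm _ _
        refine hIS (isGr V) CG hCG hGrCG CR (Or.inl hCR) hCRne ⟨?_, ?_⟩
        · rw [hCRR, hpair, h2]; exact key
        · intro j hj
          rw [hCRR, Finset.mem_singleton] at hj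
          subst hj
          rw [hCRR, hpair]
          exact (htrap.R_green_over_alone {isGr V} (Finset.singleton_nonempty _)
            (subset_refl _)).1
      by_cases h3 : CG = insert (isR V) {isGr V}
      · -- Gr is with R; then B is alone and R joins B
        obtain ⟨CB, hCB, hBCB⟩ := hcov (isB V)
        have hGrCB : isGr V ∉ CB := by
          intro h
          have heq := uniq hCB hCG h hGrCG
          rw [heq, h3] at hBCB; simp at hBCB
        have hRCB : isR V ∉ CB := by
          intro h
          have hRCG : isR V ∈ CG := by rw [h3]; exact Finset.mem_insert_self _ _
          have heq := uniq hCB hCG h hRCG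
          rw [heq, h3] at hBCB; simp at hBCB
        have hCBB : CB = {isB V} := by
          by_contra hne'
          have s : SPref pref (isB V) {isB V} CB := by
            refine htrap.B_alone_over_rest CB hBCB ?_ hne' ?_
            · intro h
              exact hRCB (h ▸ (by simp : isR V ∈ ({isR V, isB V} : Finset (ISAgent V))))
            · rintro ⟨S, hSne, hSsub, rfl⟩
              obtain rfl : S = {isGr V} := singleton_of_sub hSne hSsub
              exact hGrCB (Finset.mem_insert_of_mem (Finset.mem_singleton_self _))
          refine hIS (isB V) CB hCB hBCB ∅ (Or.inr rfl)
            (fun h => by rw [← h] at hBCB; simp at hBCB) ⟨s, by simp⟩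
        have hRCG : isR V ∈ CG := by rw [h3]; exact Finset.mem_insert_self _ _
        have hCBne : CB ≠ CG := by
          intro h; rw [← h, hCBB] at hGrCG; simp at hGrCG
        refine hIS (isR V) CG hCG hRCG CB (Or.inl hCB) hCBne ⟨?_, ?_⟩
        · rw [hCBB]
          refine htrap.R_top CG hRCG ?_
          intro h; rw [h] at hGrCG; simp at hGrCG
        · intro j hj
          rw [hCBB, Finset.mem_singleton] at hj
          subst hj
          rw [hCBB]
          exact htrap.B_RB_over_alone.1
      · -- Gr is in a junk coalition and leaves
        have snot : ¬ ∃ T : Finset (ISAgent V), isGr V ∈ T ∧ T ⊆ {isGr V} ∧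
            (CG = T ∨ CG = insert (isR V) T ∨ CG = insert (isB V) T) := by
          rintro ⟨T, hT, hTs, hc⟩
          obtain rfl : T = {isGr V} := singleton_of_sub ⟨_, hT⟩ hTs
          rcases hc with hc | hc | hc
          exacts [h1 hc, h3 hc, h2 hc]
        have s : SPref pref (isGr V) {isGr V} CG :=
          htrap.G_G_over_rest (isGr V) (Finset.mem_singleton_self _) {isGr V} CG
            (Finset.mem_singleton_self _) (subset_refl _) hGrS_not hGrCG hMG snot
        exact hIS (isGr V) CG hCG hGrCG ∅ (Or.inr rfl) hCGne ⟨s, by simp⟩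
  -- Part 3: independent set of size k implies Nash stable outcome
  have set_to_ns : (∃ W : Finset V, W.card = k ∧ ∀ u ∈ W, ∀ w ∈ W, ¬ G.Adj u w) →
      (∃ Part : Finset (Finset (ISAgent V)), IsOutcome Part ∧ NashStable pref Part) := by
    rintro ⟨W, hWc, hWind⟩
    have hWne : W.Nonempty := Finset.card_pos.1 (by omega)
    set Cstar : Finset (ISAgent V) := insert (isGr V) (W.image Sum.inl) with hCstar
    set RB : Finset (ISAgent V) := {isR V, isB V} with hRBdef
    set Sing : Finset (Finset (ISAgent V)) :=
      (Finset.univ \ W).image (fun v => {Sum.inl v}) with hSingdef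
    set Part : Finset (Finset (ISAgent V)) := insert Cstar (insert RB Sing) with hPartdef
    have hGrCstar : isGr V ∈ Cstar := Finset.mem_insert_self _ _
    have hCstarMG : Cstar ∈ isMG V k := ⟨W, hWc, hCstar⟩
    have hgoodC : ∀ v ∈ W, isGood G k v Cstar := fun v hv => ⟨W, hv, hWc, hWind, hCstar⟩
    have hmem : ∀ C ∈ Part, C = Cstar ∨ C = RB ∨ ∃ v, v ∉ W ∧ C = {Sum.inl v} := by
      intro C hC
      rcases Finset.mem_insert.1 hC with h | h
      · exact Or.inl h
      rcases Finset.mem_insert.1 h with h | h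
      · exact Or.inr (Or.inl h)
      · obtain ⟨v, hv, rfl⟩ := Finset.mem_image.1 h
        exact Or.inr (Or.inr ⟨v, (Finset.mem_sdiff.1 hv).2, rfl⟩)
    have memCstar : ∀ x : ISAgent V, x ∈ Cstar → x = isGr V ∨ ∃ v ∈ W, x = Sum.inl v := by
      intro x hx
      rcases Finset.mem_insert.1 hx with h | h
      · exact Or.inl h
      · obtain ⟨v, hv, rfl⟩ := Finset.mem_image.1 h
        exact Or.inr ⟨v, hv, rfl⟩
    refine ⟨Part, ⟨?_, ?_, ?_⟩, ?_⟩
    · -- nonempty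
      intro C hC
      rcases hmem C hC with rfl | rfl | ⟨v, hv, rfl⟩
      · exact ⟨_, hGrCstar⟩
      · exact ⟨_, Finset.mem_insert_self _ _⟩
      · exact ⟨_, Finset.mem_singleton_self _⟩
    · -- disjoint
      intro C hC D hD hCD
      rw [Finset.disjoint_left]
      intro x hxC hxD
      rcases hmem C hC with rfl | rfl | ⟨v, hv, rfl⟩ <;>
        rcases hmem D hD with rfl | rfl | ⟨u, hu, rfl⟩
      · exact hCD rfl
      · rcases memCstar x hxC with rfl | ⟨w, hw, rfl⟩ <;> simp [hRBdef] at hxD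
      · rcases memCstar x hxC with rfl | ⟨w, hw, rfl⟩ <;>
          rw [Finset.mem_singleton] at hxD
        · simp at hxD
        · obtain rfl := Sum.inl.inj hxD
          exact hu hw
      · rcases memCstar x hxD with rfl | ⟨w, hw, rfl⟩ <;> simp [hRBdef] at hxC
      · exact hCD rfl
      · rw [Finset.mem_singleton] at hxD
        subst hxD
        simp [hRBdef] at hxC
      · rcases memCstar x hxD with rfl | ⟨w, hw, rfl⟩ <;>
          rw [Finset.mem_singleton] at hxC
        · simp at hxC
        · obtain rfl := Sum.inl.inj hxC
          exact hv hw
      · rw [Finset.mem_singleton] at hxC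
        subst hxC
        simp [hRBdef] at hxD
      · rw [Finset.mem_singleton] at hxC hxD
        subst hxC
        obtain rfl := Sum.inl.inj hxD
        exact hCD rfl
    · -- cover
      intro i
      have hRBPart : RB ∈ Part := Finset.mem_insert_of_mem (Finset.mem_insert_self _ _)
      rcases i with v | j
      · by_cases hv : v ∈ W
        · exact ⟨Cstar, Finset.mem_insert_self _ _,
            Finset.mem_insert_of_mem (Finset.mem_image_of_mem _ hv)⟩
        · refine ⟨{Sum.inl v}, ?_, Finset.mem_singleton_self _⟩
          refine Finset.mem_insert_of_mem (Finset.mem_insert_of_mem ?_)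
          exact Finset.mem_image_of_mem _ (Finset.mem_sdiff.2 ⟨Finset.mem_univ _, hv⟩)
      · have hj : j = 0 ∨ j = 1 ∨ j = 2 := by omega
        rcases hj with rfl | rfl | rfl
        · exact ⟨Cstar, Finset.mem_insert_self _ _, hGrCstar⟩
        · exact ⟨RB, hRBPart, Finset.mem_insert_self _ _⟩
        · exact ⟨RB, hRBPart, Finset.mem_insert_of_mem (Finset.mem_singleton_self _)⟩
    · -- Nash stability
      intro i Ci hCi hiCi C hC hne hS
      obtain ⟨hp1, hp2⟩ := hS
      by_cases hXCi : insert i C = Ci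
      · rw [hXCi] at hp1 hp2; exact hp2 hp1
      have hCform : C = Cstar ∨ C = RB ∨ (∃ v, v ∉ W ∧ C = {Sum.inl v}) ∨ C = ∅ := by
        rcases hC with h | h
        · rcases hmem C h with h | h | h
          exacts [Or.inl h, Or.inr (Or.inl h), Or.inr (Or.inr (Or.inl h))]
        · exact Or.inr (Or.inr (Or.inr h))
      rcases i with v | j
      · -- vertex agent
        rcases hmem Ci hCi with rfl | rfl | ⟨u, hu, rfl⟩
        · -- Ci = Cstar
          have hvW : v ∈ W := by
            rcases memCstar _ hiCi with h | ⟨u, hu, he⟩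
            · simp at h
            · obtain rfl := Sum.inl.inj he; exact hu
          have hgood := hgoodC v hvW
          by_cases hg : isGood G k v (insert (Sum.inl v) C)
          · exact hp2 (hV_indiff v _ _ hgood hg)
          · by_cases he : insert (Sum.inl v) C = {Sum.inl v}
            · rw [he] at hp1
              exact (hV_over_alone v _ hgood).2 hp1
            · exact (sprefTrans pref htrans (hV_over_alone v _ hgood)
                (hV_alone_over_rest v _ (Finset.mem_insert_self _ _) hg he)).2 hp1
        · -- Ci = RB impossible for a vertex agent
          simp [hRBdef] at hiCi
        · -- Ci = {inl u}
          rw [Finset.mem_singleton] at hiCi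
          obtain rfl := Sum.inl.inj hiCi
          have hngood : ¬ isGood G k v (insert (Sum.inl v) C) := by
            intro hg
            rcases hCform with rfl | rfl | ⟨u', hu', rfl⟩ | rfl
            · -- C = Cstar
              obtain ⟨W', hvW', hc', hind', hEq⟩ := hg
              have : insert (Sum.inl v) Cstar
                  = insert (isGr V) ((insert v W).image Sum.inl) := by
                rw [hCstar, Finset.insert_comm, Finset.image_insert]
              have hWW : insert v W = W' := insert_gr_inj ((this.symm.trans hEq))
              have : W'.card = k + 1 := by
                rw [← hWW, Finset.card_insert_of_notMem hu, hWc]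
              omega
            · -- C = RB
              have : isR V ∈ insert (Sum.inl v) RB :=
                Finset.mem_insert_of_mem (Finset.mem_insert_self _ _)
              rcases good_elem hg _ this with h | ⟨w, h⟩ <;> simp at h
            · -- C = {inl u'}
              have := good_gr hg
              rcases Finset.mem_insert.1 this with h | h
              · simp at h
              · rw [Finset.mem_singleton] at h; simp at h
            · -- C = ∅
              exact hXCi rfl
          have hne2 : insert (Sum.inl v) C ≠ {Sum.inl v} := hXCi
          exact (hV_alone_over_rest v _ (Finset.mem_insert_self _ _) hngood hne2).2 hp1
      · have hj : j = 0 ∨ j = 1 ∨ j = 2 := by omega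
        rcases hj with rfl | rfl | rfl
        · -- Gr
          have hCiC : Ci = Cstar := by
            rcases hmem Ci hCi with rfl | rfl | ⟨u, hu, rfl⟩
            · rfl
            · simp [hRBdef] at hiCi
            · rw [Finset.mem_singleton] at hiCi; simp at hiCi
          subst hCiC
          by_cases hXM : insert (isGr V) C ∈ isMG V k
          · exact hp2 (hGr_indiff Cstar _ hCstarMG hXM hGrCstar (Finset.mem_insert_self _ _))
          · exact (htrap.G_MG_top (isGr V) (Finset.mem_singleton_self _) Cstar hCstarMG
              hGrCstar _ (Finset.mem_insert_self _ _) hXM).2 hp1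
        · -- R
          have hCiC : Ci = RB := by
            rcases hmem Ci hCi with rfl | rfl | ⟨u, hu, rfl⟩
            · rcases memCstar _ hiCi with h | ⟨w, hw, h⟩ <;> simp at h
            · rfl
            · rw [Finset.mem_singleton] at hiCi; simp at hiCi
          subst hCiC
          have hXne : insert (isR V) C ≠ {isR V, isB V} := by
            rcases hCform with rfl | rfl | ⟨u, hu, rfl⟩ | rfl
            · intro h
              have : isGr V ∈ ({isR V, isB V} : Finset (ISAgent V)) :=
                h ▸ Finset.mem_insert_of_mem hGrCstar
              simp at this
            · exact absurd rfl hne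
            · intro h
              have : (Sum.inl u : ISAgent V) ∈ ({isR V, isB V} : Finset (ISAgent V)) :=
                h ▸ Finset.mem_insert_of_mem (Finset.mem_singleton_self _)
              simp at this
            · intro h
              have : isB V ∈ insert (isR V) (∅ : Finset (ISAgent V)) := by
                rw [h]; exact Finset.mem_insert_of_mem (Finset.mem_singleton_self _)
              simp at this
          exact (htrap.R_top _ (Finset.mem_insert_self _ _) hXne).2 hp1
        · -- B
          have hCiC : Ci = RB := by
            rcases hmem Ci hCi with rfl | rfl | ⟨u, hu, rfl⟩
            · rcases memCstar _ hiCi with h | ⟨w, hw, h⟩ <;> simp at h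
            · rfl
            · rw [Finset.mem_singleton] at hiCi; simp at hiCi
          subst hCiC
          have s2 := htrap.B_RB_over_alone
          have key : SPref pref (isB V) {isR V, isB V} (insert (isB V) C) := by
            rcases hCform with rfl | rfl | ⟨u, hu, rfl⟩ | rfl
            · -- C = Cstar
              refine sprefTrans pref htrans s2 (htrap.B_alone_over_rest _
                (Finset.mem_insert_self _ _) ?_ ?_ ?_)
              · intro h
                have : isGr V ∈ ({isR V, isB V} : Finset (ISAgent V)) :=
                  h ▸ Finset.mem_insert_of_mem hGrCstar
                simp at this
              · intro h
                have : isGr V ∈ ({isB V} : Finset (ISAgent V)) :=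
                  h ▸ Finset.mem_insert_of_mem hGrCstar
                simp at this
              · rintro ⟨S, hSne, hSsub, hSe⟩
                obtain rfl : S = {isGr V} := singleton_of_sub hSne hSsub
                obtain ⟨w, hw⟩ := hWne
                have : (Sum.inl w : ISAgent V) ∈ (insert (isB V) {isGr V} : Finset (ISAgent V)) := by
                  rw [← hSe]
                  exact Finset.mem_insert_of_mem
                    (Finset.mem_insert_of_mem (Finset.mem_image_of_mem _ hw))
                rcases Finset.mem_insert.1 this with h | h
                · simp at h
                · rw [Finset.mem_singleton] at h; simp at h
            · exact absurd rfl hne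
            · -- C = {inl u}
              refine sprefTrans pref htrans s2 (htrap.B_alone_over_rest _
                (Finset.mem_insert_self _ _) ?_ ?_ ?_)
              · intro h
                have : (Sum.inl u : ISAgent V) ∈ ({isR V, isB V} : Finset (ISAgent V)) :=
                  h ▸ Finset.mem_insert_of_mem (Finset.mem_singleton_self _)
                simp at this
              · intro h
                have : (Sum.inl u : ISAgent V) ∈ ({isB V} : Finset (ISAgent V)) :=
                  h ▸ Finset.mem_insert_of_mem (Finset.mem_singleton_self _)
                simp at this
              · rintro ⟨S, hSne, hSsub, hSe⟩
                obtain rfl : S = {isGr V} := singleton_of_sub hSne hSsub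
                have : (Sum.inl u : ISAgent V) ∈ (insert (isB V) {isGr V} : Finset (ISAgent V)) := by
                  rw [← hSe]
                  exact Finset.mem_insert_of_mem (Finset.mem_singleton_self _)
                rcases Finset.mem_insert.1 this with h | h
                · simp at h
                · rw [Finset.mem_singleton] at h; simp at h
            · -- C = ∅
              exact s2
          exact key.2 hp1
  refine ⟨⟨ns_to_is, fun h => set_to_ns (is_to_set h)⟩,
    ⟨is_to_set, fun h => ns_to_is (set_to_ns h)⟩⟩
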